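/- With C_p-Mackey functor data as follows: A_p = (ℤ², ℤ, res(a,b) = a + p·b, tr(c) = (0, c)) and L_p = (ℤ, ℤ, res = multiplication by p, tr = id), with the inclusion ι : L_p → A_p given by ι_G(n) = (0, n) and ι_e = id. Then: (1) every endomorphism of L_p is of the form (multiplication by m, multiplication by m) for a unique integer m; (2) an endomorphism of L_p given by m extends along ι to a morphism A_p → L_p if and only if p divides m. Consequently the cokernel of the restriction map Hom(A_p, L_p) → Hom(L_p, L_p) ≅ ℤ is cyclic of order p. -/

import Mathlib

/-!
An additive endomorphism of `ℤ` is multiplication by its value at `1`, and since `tr = id` on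
`L_p` the two components of an endomorphism of `L_p` coincide. If `(gG, ge) : A_p → L_p` extends
`m`, compatibility with restriction at `(1, 0)` reads `m = ge 1 = p · gG (1, 0)`. Conversely, for
`m = p k` the morphism `k · (res_A, p·)` extends `m`.
-/

theorem AddMonoidHom.int_apply_eq_mul (f : ℤ →+ ℤ) (n : ℤ) : f n = f 1 * n := by
  simpa [mul_comm] using map_zsmul f n 1

theorem existsUnique_mul_of_comp_id_eq (fG fe trL : ℤ →+ ℤ) (htrL : ∀ n : ℤ, trL n = n)
    (h : fG.comp trL = trL.comp fe) :
    ∃! m : ℤ, (∀ n, fG n = m * n) ∧ (∀ n, fe n = m * n) := by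
  have hfe : fG = fe := AddMonoidHom.ext fun n => by
    simpa [htrL] using DFunLike.congr_fun h n
  subst hfe
  refine ⟨fG 1, ⟨fG.int_apply_eq_mul, fG.int_apply_eq_mul⟩, ?_⟩
  rintro m ⟨hm, -⟩
  simpa using (hm 1).symm

theorem dvd_of_comp_res_eq (p m : ℤ) (resA : ℤ × ℤ →+ ℤ)
    (hresA : ∀ a b : ℤ, resA (a, b) = a + p * b)
    (resL : ℤ →+ ℤ) (hresL : ∀ n : ℤ, resL n = p * n) (gG : ℤ × ℤ →+ ℤ) (ge : ℤ →+ ℤ)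
    (hres : ge.comp resA = resL.comp gG) (hge : ∀ n : ℤ, ge n = m * n) : p ∣ m := by
  have h := DFunLike.congr_fun hres (1, 0)
  simp only [AddMonoidHom.comp_apply, hresA, hresL, hge] at h
  exact ⟨gG (1, 0), by simpa using h⟩

theorem exists_extension_of_dvd (p m : ℤ) (resA : ℤ × ℤ →+ ℤ)
    (hresA : ∀ a b : ℤ, resA (a, b) = a + p * b) (trA : ℤ →+ ℤ × ℤ) (htrA : ∀ c : ℤ, trA c = (0, c))
    (resL trL : ℤ →+ ℤ) (hresL : ∀ n : ℤ, resL n = p * n) (htrL : ∀ n : ℤ, trL n = n)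
    (ιG : ℤ →+ ℤ × ℤ) (hιG : ∀ n : ℤ, ιG n = (0, n)) (hm : p ∣ m) :
    ∃ (gG : ℤ × ℤ →+ ℤ) (ge : ℤ →+ ℤ),
      ge.comp resA = resL.comp gG ∧ gG.comp trA = trL.comp ge ∧
      (∀ n : ℤ, gG (ιG n) = m * n) ∧ (∀ n : ℤ, ge n = m * n) := by
  obtain ⟨k, rfl⟩ := hm
  refine ⟨k • resA, AddMonoidHom.mulLeft (p * k), ?_, ?_, ?_, fun n => rfl⟩
  · ext ⟨a, b⟩
    simp only [AddMonoidHom.comp_apply, AddMonoidHom.coe_mulLeft, AddMonoidHom.smul_apply,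
      Int.zsmul_eq_mul, hresA, hresL]
    ring
  · ext
    simp only [AddMonoidHom.comp_apply, AddMonoidHom.coe_mulLeft, AddMonoidHom.smul_apply,
      Int.zsmul_eq_mul, hresA, htrA, htrL]
    ring
  · intro n
    simp only [AddMonoidHom.smul_apply, Int.zsmul_eq_mul, hresA, hιG]
    ring

theorem stmt_11_general (p : ℕ)
    (resA : ℤ × ℤ →+ ℤ) (hresA : ∀ a b : ℤ, resA (a, b) = a + p * b)
    (trA : ℤ →+ ℤ × ℤ) (htrA : ∀ c : ℤ, trA c = (0, c))
    (resL trL : ℤ →+ ℤ) (hresL : ∀ n : ℤ, resL n = p * n) (htrL : ∀ n : ℤ, trL n = n)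
    (ιG : ℤ →+ ℤ × ℤ) (hιG : ∀ n : ℤ, ιG n = (0, n)) :
    (∀ fG fe : ℤ →+ ℤ, fe.comp resL = resL.comp fG → fG.comp trL = trL.comp fe →
      ∃! m : ℤ, (∀ n, fG n = m * n) ∧ (∀ n, fe n = m * n)) ∧
    (∀ m : ℤ,
      ((∃ (gG : ℤ × ℤ →+ ℤ) (ge : ℤ →+ ℤ),
          ge.comp resA = resL.comp gG ∧ gG.comp trA = trL.comp ge ∧
          (∀ n : ℤ, gG (ιG n) = m * n) ∧ (∀ n : ℤ, ge n = m * n)) ↔ (p : ℤ) ∣ m)) ∧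
    Nonempty ((ℤ ⧸ AddSubgroup.zmultiples ((p : ℤ))) ≃+ ZMod p) := by
  refine ⟨fun fG fe _ htr => existsUnique_mul_of_comp_id_eq fG fe trL htrL htr,
    fun m => ⟨?_, exists_extension_of_dvd p m resA hresA trA htrA resL trL hresL htrL ιG hιG⟩,
    ⟨Int.quotientZMultiplesNatEquivZMod p⟩⟩
  rintro ⟨gG, ge, hres, -, -, hge⟩
  exact dvd_of_comp_res_eq p m resA hresA resL hresL gG ge hres hge

/-- With `A_p = (ℤ², ℤ, res (a,b) = a + p·b, tr c = (0,c))` and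
`L_p = (ℤ, ℤ, res = p·, tr = id)` and the inclusion `ι : L_p → A_p` given by
`ι_G n = (0, n)`, `ι_e = id`: (1) every endomorphism of `L_p` is multiplication by a
unique integer `m` at both levels; (2) the endomorphism `m` extends along `ι` to a
morphism `A_p → L_p` iff `p ∣ m`; consequently the cokernel of
`Hom(A_p, L_p) → Hom(L_p, L_p) ≅ ℤ` is cyclic of order `p`. -/
theorem stmt_11 (p : ℕ) (hp : 0 < p)
    (resA : ℤ × ℤ →+ ℤ) (hresA : ∀ a b : ℤ, resA (a, b) = a + p * b)
    (trA : ℤ →+ ℤ × ℤ) (htrA : ∀ c : ℤ, trA c = (0, c))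
    (resL trL : ℤ →+ ℤ) (hresL : ∀ n : ℤ, resL n = p * n) (htrL : ∀ n : ℤ, trL n = n)
    (ιG : ℤ →+ ℤ × ℤ) (hιG : ∀ n : ℤ, ιG n = (0, n)) :
    (∀ fG fe : ℤ →+ ℤ, fe.comp resL = resL.comp fG → fG.comp trL = trL.comp fe →
      ∃! m : ℤ, (∀ n, fG n = m * n) ∧ (∀ n, fe n = m * n)) ∧
    (∀ m : ℤ,
      ((∃ (gG : ℤ × ℤ →+ ℤ) (ge : ℤ →+ ℤ),
          ge.comp resA = resL.comp gG ∧ gG.comp trA = trL.comp ge ∧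
          (∀ n : ℤ, gG (ιG n) = m * n) ∧ (∀ n : ℤ, ge n = m * n)) ↔ (p : ℤ) ∣ m)) ∧
    Nonempty ((ℤ ⧸ AddSubgroup.zmultiples ((p : ℤ))) ≃+ ZMod p) :=
  stmt_11_general p resA hresA trA htrA resL trL hresL htrL ιG hιG
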